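/- In the ring of real trigonometric polynomials under pointwise operations, the function sin(x) does not divide the function 1 − cos(x). -/

import Mathlib

/-- A function `f : ℝ → ℝ` is a trigonometric polynomial if it has the form
`a 0 + ∑_{k=1}^n (a k * cos (k x) + b k * sin (k x))`. -/
def IsTrigPoly (f : ℝ → ℝ) : Prop :=
  ∃ (n : ℕ) (a b : ℕ → ℝ), ∀ x : ℝ,
    f x = a 0 + ∑ k ∈ Finset.Icc 1 n, (a k * Real.cos (k * x) + b k * Real.sin (k * x))

theorem sin_not_dvd_one_sub_cos :
    ¬ ∃ q : ℝ → ℝ, IsTrigPoly q ∧ ∀ x : ℝ, 1 - Real.cos x = Real.sin x * q x := by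
  rintro ⟨q, -, h⟩
  have := h Real.pi
  rw [Real.cos_pi, Real.sin_pi] at this
  norm_num at this
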